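/- arXiv:1804.01338 — 2 statements merged into one kernel-verified Lean document; each statement's English description precedes it below -/
import Mathlib

section
/- Let u : ℝ → ℝ be smooth and positive, let μ > 0, and define ψ(t,x) = -2 μ^(-1/2) · (∂ₓ u(t,x)) / u(t,x). If u satisfies the heat equation ∂ₓ² u = μ^(1/2) ∂ₜ u on ℝ × ℝ, then ψ satisfies the Burgers equation ∂ₜ ψ + ψ · ∂ₓ ψ = μ^(-1/2) ∂ₓ² ψ. -/
noncomputable def pd (f : ℝ × ℝ → ℝ) (v : ℝ × ℝ) (p : ℝ × ℝ) : ℝ :=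
  fderiv ℝ f p v

lemma pd_contDiff (f : ℝ × ℝ → ℝ) (hf : ContDiff ℝ (⊤ : ℕ∞) f) (v : ℝ × ℝ) :
    ContDiff ℝ (⊤ : ℕ∞) (pd f v) :=
  (hf.fderiv_right (by simp)).clm_apply contDiff_const

lemma slice_x (f : ℝ × ℝ → ℝ) (hf : ContDiff ℝ (⊤ : ℕ∞) f) (t x : ℝ) :
    HasDerivAt (fun z => f (t, z)) (pd f (0, 1) (t, x)) x := by
  have h1 : HasFDerivAt f (fderiv ℝ f (t, x)) (t, x) :=
    ((hf.differentiable (by simp)) (t, x)).hasFDerivAt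
  have h2 : HasDerivAt (fun z : ℝ => ((t : ℝ), z)) ((0 : ℝ), (1 : ℝ)) x :=
    HasDerivAt.prodMk (hasDerivAt_const x t) (hasDerivAt_id x)
  exact h1.comp_hasDerivAt x h2

lemma slice_t (f : ℝ × ℝ → ℝ) (hf : ContDiff ℝ (⊤ : ℕ∞) f) (t x : ℝ) :
    HasDerivAt (fun s => f (s, x)) (pd f (1, 0) (t, x)) t := by
  have h1 : HasFDerivAt f (fderiv ℝ f (t, x)) (t, x) :=
    ((hf.differentiable (by simp)) (t, x)).hasFDerivAt
  have h2 : HasDerivAt (fun s : ℝ => (s, (x : ℝ))) ((1 : ℝ), (0 : ℝ)) t :=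
    HasDerivAt.prodMk (hasDerivAt_id t) (hasDerivAt_const t x)
  exact h1.comp_hasDerivAt t h2

lemma pd_swap (f : ℝ × ℝ → ℝ) (hf : ContDiff ℝ (⊤ : ℕ∞) f) (v w p : ℝ × ℝ) :
    pd (pd f v) w p = pd (pd f w) v p := by
  have hdf : Differentiable ℝ (fderiv ℝ f) := (hf.fderiv_right (m := (⊤ : ℕ∞)) (by simp)).differentiable (by simp)
  have key : ∀ a : ℝ × ℝ, HasFDerivAt (pd f a)
      ((ContinuousLinearMap.apply ℝ ℝ a).comp (fderiv ℝ (fderiv ℝ f) p)) p := fun a =>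
    (ContinuousLinearMap.apply ℝ ℝ a).hasFDerivAt.comp p (hdf p).hasFDerivAt
  have hv := (key v).fderiv
  have hw := (key w).fderiv
  have hsym := second_derivative_symmetric (f' := fderiv ℝ f)
      (f'' := fderiv ℝ (fderiv ℝ f) p)
      (fun y => ((hf.differentiable (by simp)) y).hasFDerivAt) ((hdf p).hasFDerivAt) v w
  show fderiv ℝ (pd f v) p w = fderiv ℝ (pd f w) p v
  rw [hv, hw]
  simpa using hsym.symm

/-- Cole-Hopf transform: if `u` solves the heat equation, then
`ψ = -2 μ^{-1/2} ∂ₓ u / u` solves the Burgers equation. -/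
theorem cole_hopf_heat_to_burgers
    (μ : ℝ) (hμ : 0 < μ) (u ψ : ℝ × ℝ → ℝ)
    (hu : ContDiff ℝ (⊤ : ℕ∞) u) (hupos : ∀ p : ℝ × ℝ, 0 < u p)
    (hψ : ∀ t x : ℝ,
      ψ (t, x) = -2 * (Real.sqrt μ)⁻¹ * deriv (fun y => u (t, y)) x / u (t, x))
    (heat : ∀ t x : ℝ,
      deriv (fun y => deriv (fun z => u (t, z)) y) x
        - Real.sqrt μ * deriv (fun s => u (s, x)) t = 0) :
    ∀ t x : ℝ,
      deriv (fun s => ψ (s, x)) t + ψ (t, x) * deriv (fun y => ψ (t, y)) x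
        = (Real.sqrt μ)⁻¹ * deriv (fun y => deriv (fun z => ψ (t, z)) y) x := by
  intro t x
  have hs : Real.sqrt μ ≠ 0 := ne_of_gt (Real.sqrt_pos.mpr hμ)
  set ν : ℝ := (Real.sqrt μ)⁻¹ with hνdef
  have hν : ν * Real.sqrt μ = 1 := inv_mul_cancel₀ hs
  set g1 : ℝ × ℝ → ℝ := pd u (0, 1) with hg1def
  set g2 : ℝ × ℝ → ℝ := pd g1 (0, 1) with hg2def
  set g3 : ℝ × ℝ → ℝ := pd g2 (0, 1) with hg3def
  set ut : ℝ × ℝ → ℝ := pd u (1, 0) with hutdef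
  have hg1c : ContDiff ℝ (⊤ : ℕ∞) g1 := pd_contDiff u hu _
  have hg2c : ContDiff ℝ (⊤ : ℕ∞) g2 := pd_contDiff g1 hg1c _
  have hune : ∀ p : ℝ × ℝ, u p ≠ 0 := fun p => (hupos p).ne'
  -- heat equation in pd form: ut = ν * g2
  have heat' : ∀ p : ℝ × ℝ, ut p = ν * g2 p := by
    intro p
    have h := heat p.1 p.2
    rw [funext (fun y => (slice_x u hu p.1 y).deriv)] at h
    rw [(slice_x g1 hg1c p.1 p.2).deriv, (slice_t u hu p.1 p.2).deriv] at h
    have h2 : g2 (p.1, p.2) = Real.sqrt μ * ut (p.1, p.2) := by linarith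
    have : ut (p.1, p.2) = ν * g2 (p.1, p.2) := by
      rw [h2, ← mul_assoc, hν, one_mul]
    simpa using this
  -- mixed partial: ∂ₜ g1 = ν * g3
  have hmix : ∀ p : ℝ × ℝ, pd g1 (1, 0) p = ν * g3 p := by
    intro p
    rw [hg1def, pd_swap u hu _ _ p]
    have hfun : pd u (1, 0) = fun q => ν * g2 q := funext heat'
    rw [hfun]
    show fderiv ℝ (fun q => ν * g2 q) p (0, 1) = ν * g3 p
    rw [fderiv_const_mul ((hg2c.differentiable (by simp)) p) ν]
    simp [hg3def, pd]
  -- the slice derivatives at (t, x)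
  have hut := slice_t u hu t x
  have hux := slice_x u hu t x
  have hg1t := slice_t g1 hg1c t x
  -- ∂ₜ ψ
  have hfunT : (fun s => ψ (s, x)) = fun s => -2 * ν * g1 (s, x) / u (s, x) := by
    funext s
    rw [hψ s x, (slice_x u hu s x).deriv]
  have eT : HasDerivAt (fun s => -2 * ν * g1 (s, x) / u (s, x))
      ((-2 * ν * pd g1 (1, 0) (t, x) * u (t, x) - -2 * ν * g1 (t, x) * ut (t, x)) /
        u (t, x) ^ 2) t :=
    (hg1t.const_mul (-2 * ν)).div hut (hune (t, x))
  -- ∂ₓ ψ at any y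
  have eX : ∀ y : ℝ, HasDerivAt (fun z => -2 * ν * g1 (t, z) / u (t, z))
      ((-2 * ν * g2 (t, y) * u (t, y) - -2 * ν * g1 (t, y) * g1 (t, y)) /
        u (t, y) ^ 2) y := fun y =>
    ((slice_x g1 hg1c t y).const_mul (-2 * ν)).div (slice_x u hu t y) (hune (t, y))
  have hfunX : (fun y => ψ (t, y)) = fun y => -2 * ν * g1 (t, y) / u (t, y) := by
    funext y
    rw [hψ t y, (slice_x u hu t y).deriv]
  have hinner : (fun y => deriv (fun z => ψ (t, z)) y) =
      fun y => (-2 * ν * g2 (t, y) * u (t, y) - -2 * ν * g1 (t, y) * g1 (t, y)) /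
        u (t, y) ^ 2 := by
    funext y
    rw [hfunX, (eX y).deriv]
  -- second x-derivative of ψ
  have eN : HasDerivAt
      (fun y => -2 * ν * g2 (t, y) * u (t, y) - -2 * ν * g1 (t, y) * g1 (t, y))
      ((-2 * ν * g3 (t, x) * u (t, x) + -2 * ν * g2 (t, x) * g1 (t, x)) -
        (-2 * ν * g2 (t, x) * g1 (t, x) + -2 * ν * g1 (t, x) * g2 (t, x))) x :=
    (((slice_x g2 hg2c t x).const_mul (-2 * ν)).mul hux).sub
      (((slice_x g1 hg1c t x).const_mul (-2 * ν)).mul (slice_x g1 hg1c t x))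
  have eD : HasDerivAt (fun y => u (t, y) ^ 2)
      ((2 : ℕ) * u (t, x) ^ 1 * g1 (t, x)) x := hux.pow 2
  have eXX := (eN.div eD (pow_ne_zero 2 (hune (t, x)))).deriv
  simp only [Pi.div_def] at eXX
  -- assemble
  rw [hinner, eXX, hfunT, eT.deriv, hψ t x, (slice_x u hu t x).deriv, hfunX,
    (eX x).deriv, hmix (t, x), heat' (t, x)]
  simp only [← hg1def]
  push_cast
  field_simp [hune (t, x)]
  ring
end

section
/- For t, k > 0 and 0 < α < 1, there exists a nonnegative Borel measure γ_t on [0,∞) such that exp(-t k^α) = ∫_0^∞ exp(-λ k) dγ_t(λ); in the case α = 1/2 one can take dγ_t(λ) = (t / (2√π)) λ^(-3/2) exp(-t²/(4λ)) dλ, i.e. exp(-t √k) = ∫_0^∞ (t / (2√π)) λ^(-3/2) exp(-t²/(4λ)) exp(-λ k) dλ. -/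
/-!
Substituting `l = t² / (4 y²)` turns the integral into `(2 / √π) ∫₀^∞ exp (-y² - b² / y²) dy`
with `b = t √k / 2`. This integral is invariant under `y ↦ b / y`, so twice it equals
`∫₀^∞ (1 + b / y²) exp (-y² - b² / y²) dy = e^{-2b} ∫₀^∞ (1 + b / y²) exp (-(y - b / y)²) dy`,
and `u = y - b / y` maps `(0, ∞)` increasingly onto `ℝ`, leaving the Gaussian integral `√π`.
-/

open Real MeasureTheory Set

section ChangeOfVariables

variable {E : Type*} [NormedAddCommGroup E] [NormedSpace ℝ E] {b : ℝ}

lemma image_const_div_Ioi_zero (hb : 0 < b) : (fun x : ℝ => b / x) '' Ioi 0 = Ioi 0 :=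
  Subset.antisymm (image_subset_iff.2 fun _ hx => div_pos hb hx)
    fun y hy => ⟨b / y, div_pos hb hy, div_div_cancel₀ hb.ne'⟩

lemma injOn_const_div_Ioi_zero (hb : b ≠ 0) : InjOn (fun x : ℝ => b / x) (Ioi 0) :=
  fun x _ y _ h => by simpa [div_eq_mul_inv, hb] using h

lemma hasDerivAt_const_div {x : ℝ} (hx : x ≠ 0) :
    HasDerivAt (fun x => b / x) (-(b / x ^ 2)) x := by
  simpa [div_eq_mul_inv] using (hasDerivAt_inv hx).const_mul b

lemma abs_deriv_const_div_smul_comp (hb : 0 < b) (f : ℝ → E) {x : ℝ} (hx : x ∈ Ioi 0) :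
    |-(b / x ^ 2)| • f (b / x) = (b / x ^ 2) • f (b / x) := by
  rw [abs_neg, abs_of_pos (div_pos hb (pow_pos hx 2))]

theorem integral_Ioi_comp_const_div (hb : 0 < b) (f : ℝ → E) :
    ∫ x in Ioi 0, (b / x ^ 2) • f (b / x) = ∫ x in Ioi 0, f x := by
  conv_rhs => rw [← image_const_div_Ioi_zero hb]
  rw [integral_image_eq_integral_abs_deriv_smul measurableSet_Ioi
    (fun x hx => (hasDerivAt_const_div (ne_of_gt hx)).hasDerivWithinAt)
    (injOn_const_div_Ioi_zero hb.ne')]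
  exact setIntegral_congr_fun measurableSet_Ioi fun x hx =>
    (abs_deriv_const_div_smul_comp hb f hx).symm

theorem integrableOn_Ioi_comp_const_div_iff (hb : 0 < b) (f : ℝ → E) :
    IntegrableOn (fun x => (b / x ^ 2) • f (b / x)) (Ioi 0) ↔ IntegrableOn f (Ioi 0) := by
  conv_rhs => rw [← image_const_div_Ioi_zero hb]
  rw [integrableOn_image_iff_integrableOn_abs_deriv_smul measurableSet_Ioi
    (fun x hx => (hasDerivAt_const_div (ne_of_gt hx)).hasDerivWithinAt)
    (injOn_const_div_Ioi_zero hb.ne')]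
  exact integrableOn_congr_fun (fun x hx => abs_deriv_const_div_smul_comp hb f hx)
    measurableSet_Ioi |>.symm

theorem integral_Ioi_one_add_div_sq_smul_of_comp_const_div_eq (hb : 0 < b) {f : ℝ → E}
    (hf : IntegrableOn f (Ioi 0)) (hf_inv : ∀ x ∈ Ioi 0, f (b / x) = f x) :
    ∫ x in Ioi 0, (1 + b / x ^ 2) • f x = (2 : ℝ) • ∫ x in Ioi 0, f x := by
  have hcongr : EqOn (fun x => (b / x ^ 2) • f (b / x)) (fun x => (b / x ^ 2) • f x) (Ioi 0) :=
    fun x hx => congrArg ((b / x ^ 2) • ·) (hf_inv x hx)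
  have hint : IntegrableOn (fun x => (b / x ^ 2) • f x) (Ioi 0) :=
    ((integrableOn_Ioi_comp_const_div_iff hb f).2 hf).congr_fun hcongr measurableSet_Ioi
  simp only [add_smul, one_smul]
  rw [integral_add hf hint, ← setIntegral_congr_fun measurableSet_Ioi hcongr,
    integral_Ioi_comp_const_div hb, two_smul]

lemma image_sub_const_div_Ioi_zero (hb : 0 < b) : (fun x : ℝ => x - b / x) '' Ioi 0 = univ := by
  refine eq_univ_of_forall fun u => ?_
  set s := √(u ^ 2 + 4 * b)
  have hs : s ^ 2 = u ^ 2 + 4 * b := sq_sqrt (by positivity)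
  have hus : 0 < u + s := by
    have : |u| < s := by
      rw [← sqrt_sq_eq_abs]
      exact sqrt_lt_sqrt (sq_nonneg u) (by linarith)
    linarith [neg_le_abs u]
  refine ⟨(u + s) / 2, half_pos hus, ?_⟩
  field_simp
  nlinarith

lemma strictMonoOn_sub_const_div (hb : 0 < b) : StrictMonoOn (fun x : ℝ => x - b / x) (Ioi 0) :=
  fun _ hx _ _ hxy => sub_lt_sub hxy (div_lt_div_of_pos_left hb hx hxy)

lemma hasDerivAt_sub_const_div {x : ℝ} (hx : x ≠ 0) :
    HasDerivAt (fun x => x - b / x) (1 + b / x ^ 2) x :=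
  ((hasDerivAt_id' x).sub (hasDerivAt_const_div hx)).congr_deriv (sub_neg_eq_add _ _)

theorem integral_Ioi_comp_sub_const_div (hb : 0 < b) (f : ℝ → E) :
    ∫ x in Ioi 0, (1 + b / x ^ 2) • f (x - b / x) = ∫ u, f u := by
  conv_rhs => rw [← setIntegral_univ, ← image_sub_const_div_Ioi_zero hb]
  rw [integral_image_eq_integral_abs_deriv_smul measurableSet_Ioi
      (fun x hx => (hasDerivAt_sub_const_div (ne_of_gt hx)).hasDerivWithinAt)
      (strictMonoOn_sub_const_div hb).injOn]
  refine setIntegral_congr_fun measurableSet_Ioi fun x hx => ?_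
  rw [abs_of_pos (by positivity)]

theorem integral_Ioi_comp_const_div_sq {c : ℝ} (hc : 0 < c) (f : ℝ → E) :
    ∫ y in Ioi 0, (2 * c / y ^ 3) • f (c / y ^ 2) = ∫ l in Ioi 0, f l := by
  have hsqrt : 0 < √c := sqrt_pos.2 hc
  calc ∫ y in Ioi 0, (2 * c / y ^ 3) • f (c / y ^ 2)
      = ∫ y in Ioi 0, (√c / y ^ 2) •
          ((2 * (√c / y) ^ ((2 : ℝ) - 1)) • f ((√c / y) ^ (2 : ℝ))) := by
        refine setIntegral_congr_fun measurableSet_Ioi fun y hy => ?_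
        have hy : y ≠ 0 := ne_of_gt hy
        rw [smul_smul, show (2 : ℝ) - 1 = 1 by norm_num, rpow_one, rpow_two, div_pow,
          sq_sqrt hc.le]
        congr 1
        field_simp
        rw [sq_sqrt hc.le]
    _ = ∫ u in Ioi 0, (2 * u ^ ((2 : ℝ) - 1)) • f (u ^ (2 : ℝ)) :=
        integral_Ioi_comp_const_div hsqrt fun u => (2 * u ^ ((2 : ℝ) - 1)) • f (u ^ (2 : ℝ))
    _ = ∫ l in Ioi 0, f l := integral_comp_rpow_Ioi_of_pos two_pos

end ChangeOfVariables

theorem integral_exp_neg_sq_sub_sq_div_sq {b : ℝ} (hb : 0 < b) :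
    ∫ x in Ioi 0, exp (-x ^ 2 - b ^ 2 / x ^ 2) = √π / 2 * exp (-(2 * b)) := by
  set g : ℝ → ℝ := fun x => exp (-x ^ 2 - b ^ 2 / x ^ 2)
  have hg_int : IntegrableOn g (Ioi 0) := by
    refine (integrable_exp_neg_mul_sq one_pos).integrableOn.mono' (by fun_prop)
      (ae_of_all _ fun x => ?_)
    rw [norm_of_nonneg (exp_pos _).le, exp_le_exp]
    have : 0 ≤ b ^ 2 / x ^ 2 := by positivity
    linarith
  have hg_inv : ∀ x ∈ Ioi 0, g (b / x) = g x := fun x hx => by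
    have hx : x ≠ 0 := ne_of_gt hx
    simp only [g]
    congr 1
    field_simp
    ring
  have hg_sq : ∀ x ∈ Ioi 0,
      (1 + b / x ^ 2) • g x = exp (-(2 * b)) • ((1 + b / x ^ 2) • exp (-(x - b / x) ^ 2)) :=
    fun x hx => by
      have hx : x ≠ 0 := ne_of_gt hx
      simp only [g, smul_eq_mul]
      rw [mul_left_comm, ← exp_add]
      congr 2
      field_simp
      ring
  have hgauss : ∫ u, exp (-u ^ 2) = √π := by simpa using integral_gaussian 1
  have h := integral_Ioi_one_add_div_sq_smul_of_comp_const_div_eq hb hg_int hg_inv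
  rw [setIntegral_congr_fun measurableSet_Ioi hg_sq, integral_smul,
    integral_Ioi_comp_sub_const_div hb fun u => exp (-u ^ 2), hgauss, smul_eq_mul,
    smul_eq_mul] at h
  linarith

lemma subordination_integrand_comp_const_div_sq {t k y : ℝ} (ht : 0 < t) (hk : 0 ≤ k)
    (hy : 0 < y) :
    (2 * (t ^ 2 / 4) / y ^ 3) • ((t / (2 * √π)) * (t ^ 2 / 4 / y ^ 2) ^ (-(3 : ℝ) / 2) *
      exp (-t ^ 2 / (4 * (t ^ 2 / 4 / y ^ 2))) * exp (-(t ^ 2 / 4 / y ^ 2) * k))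
    = 2 / √π * exp (-y ^ 2 - (t * √k / 2) ^ 2 / y ^ 2) := by
  have hpow : (t ^ 2 / 4 / y ^ 2) ^ (-(3 : ℝ) / 2) = (2 * y / t) ^ 3 := by
    rw [show t ^ 2 / 4 / y ^ 2 = (2 * y / t) ^ (-2 : ℝ) by
        rw [rpow_neg (by positivity), rpow_two]; field_simp; ring,
      ← rpow_mul (by positivity)]
    norm_num
  have hy : y ≠ 0 := hy.ne'
  have hexp₁ : -t ^ 2 / (4 * (t ^ 2 / 4 / y ^ 2)) = -y ^ 2 := by
    field_simp
  have hexp₂ : -(t ^ 2 / 4 / y ^ 2) * k = -((t * √k / 2) ^ 2 / y ^ 2) := by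
    rw [div_pow, mul_pow, sq_sqrt hk]
    ring
  rw [hpow, hexp₁, hexp₂, sub_eq_add_neg, exp_add, smul_eq_mul]
  field_simp
  ring

/-- Bochner's subordination formula for `α = 1/2`:
`exp(-t √k) = ∫_0^∞ (t/(2√π)) λ^{-3/2} exp(-t²/(4λ)) exp(-λ k) dλ` for `t, k > 0`. -/
theorem subordination_formula_half
    (t k : ℝ) (ht : 0 < t) (hk : 0 < k) :
    Real.exp (-t * Real.sqrt k)
      = ∫ l in Set.Ioi (0 : ℝ),
          (t / (2 * Real.sqrt Real.pi)) * l ^ (-(3 : ℝ) / 2) *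
            Real.exp (-t ^ 2 / (4 * l)) * Real.exp (-l * k) := by
  rw [← integral_Ioi_comp_const_div_sq (by positivity : 0 < t ^ 2 / 4),
    setIntegral_congr_fun measurableSet_Ioi
      fun y hy => subordination_integrand_comp_const_div_sq ht hk.le hy,
    integral_const_mul, integral_exp_neg_sq_sub_sq_div_sq (by positivity)]
  field_simp
end
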